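/- arXiv:1201.1796 — 2 statements merged into one kernel-verified Lean document; each statement's English description precedes it below -/
import Mathlib

section
/- For a regular sequential method G, the G-sequentially connected component of any point x of X is a G-sequentially closed subset of X. -/
open Filter Topology Pointwise

/-- A method of sequential convergence on an additive group `X`: an additive
function defined on a subgroup of the group of `X`-valued sequences. -/
structure SeqMethod (X : Type*) [AddGroup X] where
  dom : AddSubgroup (ℕ → X)
  toFun : dom →+ X

namespace SeqMethod

variable {X : Type*} [AddGroup X]

/-- `s` G-converges to `l`. -/
def Converges (M : SeqMethod X) (s : ℕ → X) (l : X) : Prop :=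
  ∃ h : s ∈ M.dom, M.toFun ⟨s, h⟩ = l

/-- The G-sequential closure of `A`. -/
def GClosure (M : SeqMethod X) (A : Set X) : Set X :=
  {l | ∃ s : ℕ → X, (∀ n, s n ∈ A) ∧ M.Converges s l}

/-- `A` is G-sequentially closed. -/
def GClosed (M : SeqMethod X) (A : Set X) : Prop := M.GClosure A ⊆ A

/-- `A` is G-sequentially open. -/
def GOpen (M : SeqMethod X) (A : Set X) : Prop := M.GClosed Aᶜ

/-- `M` is regular: every convergent sequence G-converges to its limit. -/
def Regular [TopologicalSpace X] (M : SeqMethod X) : Prop :=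
  ∀ (s : ℕ → X) (l : X), Tendsto s atTop (𝓝 l) → M.Converges s l

/-- `A` is G-sequentially connected: `A` is nonempty and there are no nonempty
disjoint G-sequentially closed subsets of `X`, each meeting `A`, covering `A`. -/
def GConnected (M : SeqMethod X) (A : Set X) : Prop :=
  A.Nonempty ∧ ¬ ∃ U V : Set X, M.GClosed U ∧ M.GClosed V ∧
    (U ∩ A).Nonempty ∧ (V ∩ A).Nonempty ∧ Disjoint U V ∧ A ⊆ U ∪ V

/-- The G-sequentially connected component of `x` inside a subset `A`. -/
def ComponentIn (M : SeqMethod X) (A : Set X) (x : X) : Set X :=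
  ⋃₀ {C : Set X | x ∈ C ∧ C ⊆ A ∧ M.GConnected C}

/-- The G-sequentially connected component of `x` in `X`. -/
def Component (M : SeqMethod X) (x : X) : Set X :=
  ⋃₀ {C : Set X | x ∈ C ∧ M.GConnected C}

/-- `f` is G-sequentially continuous on `X`. -/
def GCont (M : SeqMethod X) (f : X → X) : Prop :=
  ∀ (s : ℕ → X) (u : X), M.Converges s u → M.Converges (fun n => f (s n)) (f u)

/-- `f` is G-sequentially continuous on the subset `A`. -/
def GContOn (M : SeqMethod X) (f : X → X) (A : Set X) : Prop :=
  ∀ (s : ℕ → X) (u : X), (∀ n, s n ∈ A) → u ∈ A →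
    M.Converges s u → M.Converges (fun n => f (s n)) (f u)

/-- `F` is G-sequentially closed in `A`. -/
def GClosedIn (M : SeqMethod X) (A F : Set X) : Prop :=
  ∃ U : Set X, M.GClosed U ∧ F = U ∩ A

/-- `V` is G-sequentially open in `A`. -/
def GOpenIn (M : SeqMethod X) (A V : Set X) : Prop :=
  V ⊆ A ∧ M.GClosedIn A (A \ V)

/-- The set of G-sequentially connected components of points of `A`. -/
def pi0 (M : SeqMethod X) (A : Set X) : Set (Set X) :=
  {C : Set X | ∃ x ∈ A, C = M.ComponentIn A x}

/-- `X` is G-sequentially locally connected. -/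
def GLocConn (M : SeqMethod X) : Prop :=
  ∀ (x : X) (U : Set X), M.GOpen U → x ∈ U →
    ∃ V : Set X, M.GConnected V ∧ (∃ O : Set X, M.GOpen O ∧ x ∈ O ∧ O ⊆ V) ∧
      x ∈ V ∧ V ⊆ U

/-- A subset `A` is G-sequentially locally connected (with the relative
G-sequentially open sets). -/
def GLocConnOn (M : SeqMethod X) (A : Set X) : Prop :=
  ∀ a ∈ A, ∀ U : Set X, M.GOpenIn A U → a ∈ U →
    ∃ V : Set X, M.GConnected V ∧ (∃ O : Set X, M.GOpenIn A O ∧ a ∈ O ∧ O ⊆ V) ∧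
      a ∈ V ∧ V ⊆ U

end SeqMethod

namespace SeqMethod

variable {X : Type*} [AddGroup X] {M : SeqMethod X} {A B C U V : Set X} {x : X}

theorem subset_gClosure [TopologicalSpace X] (hreg : M.Regular) (A : Set X) :
    A ⊆ M.GClosure A := fun a ha =>
  ⟨fun _ => a, fun _ => ha, hreg _ a tendsto_const_nhds⟩

theorem gClosure_mono (h : A ⊆ B) : M.GClosure A ⊆ M.GClosure B :=
  fun _ ⟨s, hs, hsl⟩ => ⟨s, fun n => h (hs n), hsl⟩

theorem GClosed.gClosure_subset (hU : M.GClosed U) (h : A ⊆ U) : M.GClosure A ⊆ U :=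
  (gClosure_mono h).trans hU

theorem gConnected_iff : M.GConnected A ↔ A.Nonempty ∧ ∀ U V, M.GClosed U → M.GClosed V →
    Disjoint U V → A ⊆ U ∪ V → A ⊆ U ∨ A ⊆ V := by
  refine and_congr_right fun _ => ⟨fun hA U V hU hV hUV hAUV => ?_, fun h => ?_⟩
  · rw [or_iff_not_and_not]
    rintro ⟨hAU, hAV⟩
    obtain ⟨u, huA, hu⟩ := Set.not_subset.mp hAU
    obtain ⟨v, hvA, hv⟩ := Set.not_subset.mp hAV
    refine hA ⟨U, V, hU, hV, ⟨v, ?_, hvA⟩, ⟨u, ?_, huA⟩, hUV, hAUV⟩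
    · exact (hAUV hvA).resolve_right hv
    · exact (hAUV huA).resolve_left hu
  · rintro ⟨U, V, hU, hV, ⟨u, huU, huA⟩, ⟨v, hvV, hvA⟩, hUV, hAUV⟩
    rcases h U V hU hV hUV hAUV with hAU | hAV
    · exact hUV.ne_of_mem (hAU hvA) hvV rfl
    · exact hUV.ne_of_mem huU (hAV huA) rfl

theorem GConnected.subset_of_mem (hC : M.GConnected C) (hU : M.GClosed U) (hV : M.GClosed V)
    (hUV : Disjoint U V) (hCUV : C ⊆ U ∪ V) (hxC : x ∈ C) (hxU : x ∈ U) : C ⊆ U :=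
  ((gConnected_iff.mp hC).2 U V hU hV hUV hCUV).resolve_right
    fun hCV => hUV.ne_of_mem hxU (hCV hxC) rfl

theorem gConnected_singleton (M : SeqMethod X) (x : X) : M.GConnected {x} :=
  gConnected_iff.mpr ⟨Set.singleton_nonempty x, fun _ _ _ _ _ h =>
    (h rfl).imp Set.singleton_subset_iff.mpr Set.singleton_subset_iff.mpr⟩

theorem gConnected_sUnion_of_mem {S : Set (Set X)} (hne : S.Nonempty)
    (hxS : ∀ C ∈ S, x ∈ C) (hS : ∀ C ∈ S, M.GConnected C) : M.GConnected (⋃₀ S) := by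
  obtain ⟨C₀, hC₀⟩ := hne
  have hx : x ∈ ⋃₀ S := ⟨C₀, hC₀, hxS C₀ hC₀⟩
  refine gConnected_iff.mpr ⟨⟨x, hx⟩, fun U V hU hV hUV hSUV => ?_⟩
  have hCUV : ∀ C ∈ S, C ⊆ U ∪ V := fun C hC => (Set.subset_sUnion_of_mem hC).trans hSUV
  rcases hSUV hx with hxU | hxV
  · exact .inl <| Set.sUnion_subset fun C hC =>
      (hS C hC).subset_of_mem hU hV hUV (hCUV C hC) (hxS C hC) hxU
  · refine .inr <| Set.sUnion_subset fun C hC =>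
      (hS C hC).subset_of_mem hV hU hUV.symm ?_ (hxS C hC) hxV
    exact Set.union_comm U V ▸ hCUV C hC

theorem GConnected.gClosure [TopologicalSpace X] (hreg : M.Regular) (hA : M.GConnected A) :
    M.GConnected (M.GClosure A) := by
  obtain ⟨hne, hsplit⟩ := gConnected_iff.mp hA
  refine gConnected_iff.mpr ⟨hne.mono (subset_gClosure hreg A), fun U V hU hV hUV h => ?_⟩
  exact (hsplit U V hU hV hUV ((subset_gClosure hreg A).trans h)).imp
    hU.gClosure_subset hV.gClosure_subset

theorem mem_component_self (M : SeqMethod X) (x : X) : x ∈ M.Component x :=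
  ⟨{x}, ⟨rfl, M.gConnected_singleton x⟩, rfl⟩

theorem gConnected_component (M : SeqMethod X) (x : X) : M.GConnected (M.Component x) :=
  gConnected_sUnion_of_mem ⟨{x}, rfl, M.gConnected_singleton x⟩
    (fun _ hC => hC.1) fun _ hC => hC.2

theorem GConnected.subset_component (hC : M.GConnected C) (hxC : x ∈ C) :
    C ⊆ M.Component x :=
  Set.subset_sUnion_of_mem ⟨hxC, hC⟩

end SeqMethod

open SeqMethod

variable {X : Type*} [AddGroup X] [TopologicalSpace X] [IsTopologicalAddGroup X]
  [FirstCountableTopology X] [T2Space X]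

theorem component_gClosed (M : SeqMethod X) (hreg : M.Regular) (x : X) :
    M.GClosed (M.Component x) :=
  ((M.gConnected_component x).gClosure hreg).subset_component
    (subset_gClosure hreg _ (M.mem_component_self x))
end

section
/- Let G be a regular sequential method on X. If X is generated by a G-sequentially connected symmetric neighbourhood U of the identity (every element of X is a finite sum of elements of U), then X is G-sequentially connected. -/
open Filter Topology Pointwise

namespace SeqMethod

variable {X : Type*} [AddGroup X] {M : SeqMethod X}

theorem Converges.add {s t : ℕ → X} {l m : X} (hs : M.Converges s l) (ht : M.Converges t m) :
    M.Converges (s + t) (l + m) := by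
  obtain ⟨hs, rfl⟩ := hs
  obtain ⟨ht, rfl⟩ := ht
  exact ⟨M.dom.add_mem hs ht, map_add M.toFun ⟨s, hs⟩ ⟨t, ht⟩⟩

theorem Regular.converges_const [TopologicalSpace X] (hM : M.Regular) (y : X) :
    M.Converges (fun _ => y) y :=
  hM _ _ tendsto_const_nhds

theorem GClosed.preimage_add_right [TopologicalSpace X] (hM : M.Regular) {D : Set X}
    (hD : M.GClosed D) (y : X) : M.GClosed ((· + y) ⁻¹' D) := by
  rintro l ⟨s, hsD, hsl⟩
  exact hD ⟨s + fun _ => y, hsD, hsl.add (hM.converges_const y)⟩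

theorem GConnected.image {A : Set X} (hA : M.GConnected A) {f : X → X}
    (hf : ∀ D, M.GClosed D → M.GClosed (f ⁻¹' D)) : M.GConnected (f '' A) := by
  refine ⟨hA.1.image f, ?_⟩
  rintro ⟨D₁, D₂, hD₁, hD₂, ⟨-, h₁, a₁, ha₁, rfl⟩, ⟨-, h₂, a₂, ha₂, rfl⟩, hdisj, hcov⟩
  exact hA.2 ⟨f ⁻¹' D₁, f ⁻¹' D₂, hf D₁ hD₁, hf D₂ hD₂, ⟨a₁, h₁, ha₁⟩, ⟨a₂, h₂, ha₂⟩,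
    hdisj.preimage f, fun a ha => hcov ⟨a, ha, rfl⟩⟩

theorem GConnected.image_add_right [TopologicalSpace X] (hM : M.Regular) {A : Set X}
    (hA : M.GConnected A) (y : X) : M.GConnected ((· + y) '' A) :=
  hA.image fun _ hD => hD.preimage_add_right hM y

theorem GConnected.subset_or_subset {A C₁ C₂ : Set X} (hA : M.GConnected A)
    (hC₁ : M.GClosed C₁) (hC₂ : M.GClosed C₂) (hdisj : Disjoint C₁ C₂) (hcov : A ⊆ C₁ ∪ C₂) :
    A ⊆ C₁ ∨ A ⊆ C₂ := by
  by_contra! h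
  obtain ⟨⟨a₂, ha₂, ha₂C₁⟩, ⟨a₁, ha₁, ha₁C₂⟩⟩ := And.imp Set.not_subset.1 Set.not_subset.1 h
  exact hA.2 ⟨C₁, C₂, hC₁, hC₂, ⟨a₁, (hcov ha₁).resolve_right ha₁C₂, ha₁⟩,
    ⟨a₂, (hcov ha₂).resolve_left ha₂C₁, ha₂⟩, hdisj, hcov⟩

end SeqMethod

theorem eq_empty_or_univ_of_add_mem_iff {X : Type*} [AddMonoid X] {U S : Set X}
    (hgen : ∀ x : X, ∃ l : List X, (∀ u ∈ l, u ∈ U) ∧ l.sum = x)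
    (hS : ∀ a ∈ U, ∀ y, a + y ∈ S ↔ y ∈ S) : S = ∅ ∨ S = Set.univ := by
  have hsum : ∀ l : List X, (∀ u ∈ l, u ∈ U) → (l.sum ∈ S ↔ (0 : X) ∈ S) := by
    intro l hl
    induction l with
    | nil => rfl
    | cons a t ih =>
      rw [List.sum_cons, hS a (hl a List.mem_cons_self)]
      exact ih fun u hu => hl u (List.mem_cons_of_mem a hu)
  by_cases h0 : (0 : X) ∈ S
  · refine Or.inr (Set.eq_univ_of_forall fun x => ?_)
    obtain ⟨l, hl, rfl⟩ := hgen x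
    exact (hsum l hl).2 h0
  · refine Or.inl (Set.eq_empty_of_forall_notMem fun x hx => ?_)
    obtain ⟨l, hl, rfl⟩ := hgen x
    exact h0 ((hsum l hl).1 hx)

open SeqMethod

variable {X : Type*} [AddGroup X] [TopologicalSpace X] [IsTopologicalAddGroup X]
  [FirstCountableTopology X] [T2Space X]

theorem gConnected_of_generated_by_connected_nhd_general (M : SeqMethod X) (hreg : M.Regular)
    (U : Set X) (hU : U ∈ 𝓝 (0 : X)) (hconn : M.GConnected U)
    (hgen : ∀ x : X, ∃ l : List X, (∀ u ∈ l, u ∈ U) ∧ l.sum = x) :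
    M.GConnected (Set.univ : Set X) := by
  refine ⟨Set.univ_nonempty, ?_⟩
  rintro ⟨C₁, C₂, hC₁, hC₂, ⟨x₁, hx₁, -⟩, ⟨x₂, hx₂, -⟩, hdisj, hcov⟩
  -- each right translate `U + y` is G-connected and contains `y`, so it lies on the side of `y`
  have hinv : ∀ a ∈ U, ∀ y, a + y ∈ C₁ ↔ y ∈ C₁ := by
    intro a ha y
    have hy : y ∈ (· + y) '' U := ⟨0, mem_of_mem_nhds hU, zero_add y⟩
    have hay : a + y ∈ (· + y) '' U := ⟨a, ha, rfl⟩
    rcases (hconn.image_add_right hreg y).subset_or_subset hC₁ hC₂ hdisj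
      fun z _ => hcov (Set.mem_univ z) with h | h
    · exact iff_of_true (h hay) (h hy)
    · exact iff_of_false (hdisj.notMem_of_mem_right (h hay)) (hdisj.notMem_of_mem_right (h hy))
  rcases eq_empty_or_univ_of_add_mem_iff hgen hinv with h | h
  · exact (h ▸ hx₁ : x₁ ∈ (∅ : Set X))
  · exact hdisj.notMem_of_mem_right hx₂ (h ▸ Set.mem_univ x₂)

theorem gConnected_of_generated_by_connected_nhd (M : SeqMethod X) (hreg : M.Regular)
    (U : Set X) (hU : U ∈ 𝓝 (0 : X)) (hsym : U = -U) (hconn : M.GConnected U)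
    (hgen : ∀ x : X, ∃ l : List X, (∀ u ∈ l, u ∈ U) ∧ l.sum = x) :
    M.GConnected (Set.univ : Set X) :=
  gConnected_of_generated_by_connected_nhd_general M hreg U hU hconn hgen
end
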